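/- For k = 2, the defining ideal of S_{a,d,2} = ⟨a, a+d, a+2d⟩ is the principal ideal ⟨x₂² − x₁x₃⟩ in k[x₁,x₂,x₃], and the Hilbert series of k[S_{a,d,2}] equals (1 − t^{2a+2d}) / ((1−t^a)(1−t^{a+d})(1−t^{a+2d})). -/

import Mathlib

variable (𝕜 : Type) [Field 𝕜]

/-- The affine semigroup `S_{a,d,k} = ⟨a, a+d, …, a+kd⟩ ⊆ ℕ²`. -/
def Sadk (a d : ℕ × ℕ) (k : ℕ) : AddSubmonoid (ℕ × ℕ) :=
  AddSubmonoid.closure {x : ℕ × ℕ | ∃ i : ℕ, i ≤ k ∧ x = a + i • d}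

/-- `a` and `d` are linearly independent over `ℚ`. -/
def qLinIndep (a d : ℕ × ℕ) : Prop :=
  LinearIndependent ℚ ![((a.1 : ℚ), (a.2 : ℚ)), ((d.1 : ℚ), (d.2 : ℚ))]

/-- The generating set `a, a+d, …, a+kd` of `S_{a,d,k}` is minimal. -/
def minGen (a d : ℕ × ℕ) (k : ℕ) : Prop :=
  ∀ i : ℕ, i ≤ k →
    a + i • d ∉ AddSubmonoid.closure {x : ℕ × ℕ | ∃ j : ℕ, j ≤ k ∧ j ≠ i ∧ x = a + j • d}

/-- The monomial `t^s = t₁^{s₁} t₂^{s₂}` as a power series in two variables. -/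
noncomputable def Tm (s : ℕ × ℕ) : MvPowerSeries (Fin 2) 𝕜 :=
  MvPowerSeries.monomial (Finsupp.single (0 : Fin 2) s.1 + Finsupp.single 1 s.2) (1 : 𝕜)

open scoped Classical in
/-- The multigraded Hilbert series `H(𝕜[S], t) = Σ_{s ∈ S} t^s` of the semigroup algebra of
`S ⊆ ℕ²`, as a formal power series in `t₁, t₂`. -/
noncomputable def hilbertSeries (S : AddSubmonoid (ℕ × ℕ)) : MvPowerSeries (Fin 2) 𝕜 :=
  fun e => if (e 0, e 1) ∈ S then 1 else 0

open MvPolynomial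

/-- The monomial `t^s = t₁^{s₁} t₂^{s₂}` in `𝕜[t₁, t₂]`. -/
noncomputable def mono2 (s : ℕ × ℕ) : MvPolynomial (Fin 2) 𝕜 :=
  monomial (Finsupp.single 0 s.1 + Finsupp.single 1 s.2) 1

/-- The defining ideal `I_{S_{a,d,2}} ⊆ 𝕜[x₁,x₂,x₃]`: the kernel of `xᵢ ↦ t^{a+(i−1)d}`. -/
noncomputable def toricIdeal2 (a d : ℕ × ℕ) : Ideal (MvPolynomial (Fin 3) 𝕜) :=
  RingHom.ker ((aeval fun i : Fin 3 => mono2 𝕜 (a + (i : ℕ) • d)) :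
    MvPolynomial (Fin 3) 𝕜 →ₐ[𝕜] MvPolynomial (Fin 2) 𝕜)

namespace Sad2
open MvPowerSeries


open scoped Classical

variable {a d : ℕ × ℕ}

lemma smul_fst (m : ℕ) (x : ℕ × ℕ) : (m • x).1 = m * x.1 := rfl
lemma smul_snd (m : ℕ) (x : ℕ × ℕ) : (m • x).2 = m * x.2 := rfl

lemma uniq (hli : qLinIndep a d) {m n m' n' : ℕ}
    (h : m • a + n • d = m' • a + n' • d) : m = m' ∧ n = n' := by
  rw [qLinIndep, LinearIndependent.pair_iff] at hli
  have h1 : m * a.1 + n * d.1 = m' * a.1 + n' * d.1 := congrArg Prod.fst h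
  have h2 : m * a.2 + n * d.2 = m' * a.2 + n' * d.2 := congrArg Prod.snd h
  have key := hli ((m : ℚ) - m') ((n : ℚ) - n') (by
    rw [Prod.ext_iff]
    constructor <;> simp only [Prod.smul_fst, Prod.smul_snd, Prod.fst_add, Prod.snd_add,
      smul_eq_mul, Prod.fst_zero, Prod.snd_zero]
    · have := congrArg (fun x : ℕ => (x : ℚ)) h1
      push_cast at this ⊢; linarith
    · have := congrArg (fun x : ℕ => (x : ℚ)) h2
      push_cast at this ⊢; linarith)
  constructor
  · have : (m : ℚ) = m' := by linarith [sub_eq_zero.mp key.1]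
    exact_mod_cast this
  · have : (n : ℚ) = n' := by linarith [sub_eq_zero.mp key.2]
    exact_mod_cast this

lemma a_ne_zero (hli : qLinIndep a d) : a.1 ≠ 0 ∨ a.2 ≠ 0 := by
  rw [qLinIndep, LinearIndependent.pair_iff] at hli
  by_contra h
  push_neg at h
  have := (hli 1 0 (by
    rw [Prod.ext_iff]
    simp [h.1, h.2])).1
  norm_num at this

/-- membership predicate for the submonoid generated by g₀ = a, g₂ = a + 2d -/
def Mp (a d : ℕ × ℕ) (x : ℕ × ℕ) : Prop :=
  ∃ p r : ℕ, x = p • (a + 0 • d) + r • (a + 2 • d)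

lemma MtoS (p r : ℕ) :
    p • (a + 0 • d) + r • (a + 2 • d) = (p + r) • a + (2 * r) • d := by
  apply Prod.ext <;>
    simp only [Prod.fst_add, Prod.snd_add, smul_fst, smul_snd] <;> ring

lemma M1toS (p r : ℕ) :
    p • (a + 0 • d) + r • (a + 2 • d) + (a + 1 • d)
      = (p + r + 1) • a + (2 * r + 1) • d := by
  apply Prod.ext <;>
    simp only [Prod.fst_add, Prod.snd_add, smul_fst, smul_snd] <;> ring

lemma shift_iff (x s y : ℕ × ℕ) :
    (s.1 ≤ x.1 ∧ s.2 ≤ x.2 ∧ (x.1 - s.1, x.2 - s.2) = y) ↔ x = y + s := by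
  constructor
  · rintro ⟨h1, h2, rfl⟩
    apply Prod.ext <;> simp <;> omega
  · rintro rfl
    refine ⟨by simp, by simp, ?_⟩
    apply Prod.ext <;> simp

/-- the "shifted membership" guard, as appears in coefficient computations -/
lemma guard_iff (x s : ℕ × ℕ) :
    (s.1 ≤ x.1 ∧ s.2 ≤ x.2 ∧ Mp a d (x.1 - s.1, x.2 - s.2)) ↔
      ∃ y, x = y + s ∧ Mp a d y := by
  constructor
  · rintro ⟨h1, h2, h3⟩
    exact ⟨_, (shift_iff x s _).mp ⟨h1, h2, rfl⟩, h3⟩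
  · rintro ⟨y, rfl, hy⟩
    have := (shift_iff (y + s) s y).mpr rfl
    exact ⟨this.1, this.2.1, this.2.2.symm ▸ hy⟩

lemma smul_combine (p r c₀ c₂ : ℕ) :
    (p • (a + 0 • d) + r • (a + 2 • d)) + (c₀ • (a + 0 • d) + c₂ • (a + 2 • d))
      = (p + c₀) • (a + 0 • d) + (r + c₂) • (a + 2 • d) := by
  rw [add_smul, add_smul]; abel

lemma rep_eq_zero_iff (hli : qLinIndep a d) (p r : ℕ) :
    p • (a + 0 • d) + r • (a + 2 • d) = 0 ↔ p = 0 ∧ r = 0 := by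
  rw [MtoS]
  constructor
  · intro h
    have h1 : (p + r) * a.1 + 2 * r * d.1 = 0 := congrArg Prod.fst h
    have h2 : (p + r) * a.2 + 2 * r * d.2 = 0 := congrArg Prod.snd h
    rcases a_ne_zero hli with ha | ha
    · rcases Nat.mul_eq_zero.mp (Nat.eq_zero_of_add_eq_zero_right h1) with h' | h' <;> omega
    · rcases Nat.mul_eq_zero.mp (Nat.eq_zero_of_add_eq_zero_right h2) with h' | h' <;> omega
  · rintro ⟨rfl, rfl⟩; simp

/-- the guard with shift c₀•g₀+c₂•g₂, in the case x = p•g₀+r•g₂ -/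
lemma guardM_iff (hli : qLinIndep a d) (p r c₀ c₂ : ℕ) :
    (∃ y, p • (a + 0 • d) + r • (a + 2 • d) = y + (c₀ • (a + 0 • d) + c₂ • (a + 2 • d)) ∧
        Mp a d y) ↔ (c₀ ≤ p ∧ c₂ ≤ r) := by
  constructor
  · rintro ⟨y, hy, p', r', rfl⟩
    rw [smul_combine] at hy
    rw [MtoS, MtoS] at hy
    obtain ⟨h1, h2⟩ := uniq hli hy
    omega
  · rintro ⟨h1, h2⟩
    refine ⟨(p - c₀) • (a + 0 • d) + (r - c₂) • (a + 2 • d), ?_, ⟨_, _, rfl⟩⟩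
    rw [smul_combine]
    congr 2 <;> omega


lemma mem_Sadk_iff (s : ℕ × ℕ) :
    s ∈ Sadk a d 2 ↔ ∃ m n : ℕ, n ≤ 2 * m ∧ s = m • a + n • d := by
  constructor
  · intro hs
    induction hs using AddSubmonoid.closure_induction with
    | mem x hx =>
      obtain ⟨i, hi, rfl⟩ := hx
      exact ⟨1, i, by omega, by rw [one_smul]⟩
    | zero => exact ⟨0, 0, le_rfl, by simp⟩
    | add x y _ _ hx hy =>
      obtain ⟨m, n, hn, rfl⟩ := hx
      obtain ⟨m', n', hn', rfl⟩ := hy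
      exact ⟨m + m', n + n', by omega, by
        simp only [add_smul]; abel⟩
  · rintro ⟨m, n, hn, rfl⟩
    have key : (m - n / 2 - n % 2) • (a + 0 • d) + (n % 2) • (a + 1 • d)
        + (n / 2) • (a + 2 • d) = m • a + n • d := by
      have : (m - n / 2 - n % 2) • (a + 0 • d) + (n % 2) • (a + 1 • d)
          + (n / 2) • (a + 2 • d)
          = ((m - n / 2 - n % 2) + (n % 2) + (n / 2)) • a
            + ((n % 2) + 2 * (n / 2)) • d := by
        apply Prod.ext <;>
          simp only [Prod.fst_add, Prod.snd_add, smul_fst, smul_snd] <;> ring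
      rw [this]
      congr 2 <;> omega
    rw [← key]
    have hgen : ∀ i : ℕ, i ≤ 2 → a + i • d ∈ Sadk a d 2 := fun i hi =>
      AddSubmonoid.subset_closure ⟨i, hi, rfl⟩
    exact add_mem (add_mem (AddSubmonoid.nsmul_mem _ (hgen 0 (by norm_num)) _)
      (AddSubmonoid.nsmul_mem _ (hgen 1 (by norm_num)) _))
      (AddSubmonoid.nsmul_mem _ (hgen 2 le_rfl) _)

/-- The main "pure" identity for the free part:
  χ_M(x) - χ(x - g₀ ∈ M) - χ(x - g₂ ∈ M) + χ(x - g₀ - g₂ ∈ M) = χ(x = 0). -/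
lemma pureM (hli : qLinIndep a d) (x : ℕ × ℕ) :
    (if Mp a d x then (1:𝕜) else 0)
      - (if (a + 0 • d).1 ≤ x.1 ∧ (a + 0 • d).2 ≤ x.2 ∧
            Mp a d (x.1 - (a + 0 • d).1, x.2 - (a + 0 • d).2) then 1 else 0)
      - (if (a + 2 • d).1 ≤ x.1 ∧ (a + 2 • d).2 ≤ x.2 ∧
            Mp a d (x.1 - (a + 2 • d).1, x.2 - (a + 2 • d).2) then 1 else 0)
      + (if ((a + 0 • d) + (a + 2 • d)).1 ≤ x.1 ∧ ((a + 0 • d) + (a + 2 • d)).2 ≤ x.2 ∧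
            Mp a d (x.1 - ((a + 0 • d) + (a + 2 • d)).1,
              x.2 - ((a + 0 • d) + (a + 2 • d)).2) then 1 else 0)
      = if x.1 = 0 ∧ x.2 = 0 then 1 else 0 := by
  have hg0 : (a + 0 • d) = 1 • (a + 0 • d) + 0 • (a + 2 • d) := by simp
  have hg2 : (a + 2 • d) = 0 • (a + 0 • d) + 1 • (a + 2 • d) := by simp
  have hg02 : (a + 0 • d) + (a + 2 • d) = 1 • (a + 0 • d) + 1 • (a + 2 • d) := by simp
  by_cases hM : Mp a d x
  · obtain ⟨p, r, hx⟩ := hM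
    have e0 : ((a + 0 • d).1 ≤ x.1 ∧ (a + 0 • d).2 ≤ x.2 ∧
        Mp a d (x.1 - (a + 0 • d).1, x.2 - (a + 0 • d).2)) ↔ (1 ≤ p ∧ 0 ≤ r) := by
      rw [guard_iff, hx]
      nth_rewrite 2 [hg0]
      exact guardM_iff hli p r 1 0
    have e2 : ((a + 2 • d).1 ≤ x.1 ∧ (a + 2 • d).2 ≤ x.2 ∧
        Mp a d (x.1 - (a + 2 • d).1, x.2 - (a + 2 • d).2)) ↔ (0 ≤ p ∧ 1 ≤ r) := by
      rw [guard_iff, hx]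
      nth_rewrite 2 [hg2]
      exact guardM_iff hli p r 0 1
    have e02 : (((a + 0 • d) + (a + 2 • d)).1 ≤ x.1 ∧ ((a + 0 • d) + (a + 2 • d)).2 ≤ x.2 ∧
        Mp a d (x.1 - ((a + 0 • d) + (a + 2 • d)).1,
          x.2 - ((a + 0 • d) + (a + 2 • d)).2)) ↔ (1 ≤ p ∧ 1 ≤ r) := by
      rw [guard_iff, hx]
      rw [hg02]
      exact guardM_iff hli p r 1 1
    have ez : (x.1 = 0 ∧ x.2 = 0) ↔ (p = 0 ∧ r = 0) := by
      constructor
      · intro h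
        exact (rep_eq_zero_iff hli p r).mp
          (by rw [← hx]; exact Prod.ext_iff.mpr ⟨h.1, h.2⟩)
      · intro h
        have h2 := (rep_eq_zero_iff hli p r).mpr h
        rw [← hx] at h2
        rw [h2]
        exact ⟨rfl, rfl⟩
    rw [if_pos ⟨p, r, hx⟩, if_congr e0 rfl rfl, if_congr e2 rfl rfl,
      if_congr e02 rfl rfl, if_congr ez rfl rfl]
    rcases Nat.eq_zero_or_pos p with hp | hp <;> rcases Nat.eq_zero_or_pos r with hr | hr <;>
      subst_vars <;> norm_num
    · rw [if_pos (show 1 ≤ r by omega), if_neg (by omega)]; norm_num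
    · rw [if_pos (show 1 ≤ p by omega), if_neg (by omega)]; norm_num
    · rw [if_pos (show 1 ≤ p by omega), if_pos (show 1 ≤ r by omega),
        if_pos (show 1 ≤ p ∧ 1 ≤ r by omega), if_neg (by omega)]; ring
  · have h0 : ¬ (x.1 = 0 ∧ x.2 = 0) := by
      intro h
      exact hM ⟨0, 0, by
        have hx0 : x = 0 := Prod.ext_iff.mpr ⟨h.1, h.2⟩
        rw [hx0]; simp⟩
    have key : ∀ c₀ c₂ : ℕ, ¬ (∃ y, x = y + (c₀ • (a + 0 • d) + c₂ • (a + 2 • d)) ∧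
        Mp a d y) := by
      rintro c₀ c₂ ⟨y, rfl, p', r', rfl⟩
      exact hM ⟨p' + c₀, r' + c₂, by rw [smul_combine]⟩
    rw [if_neg hM, if_neg h0, if_neg, if_neg, if_neg]
    · norm_num
    · rw [guard_iff, hg02]; exact key 1 1
    · rw [guard_iff, hg2]; exact key 0 1
    · rw [guard_iff, hg0]; exact key 1 0


/-- S = M ∪ (g₁ + M), as indicator identity. -/
lemma pureS (hli : qLinIndep a d) (x : ℕ × ℕ) :
    (if x ∈ Sadk a d 2 then (1:𝕜) else 0)
      = (if Mp a d x then 1 else 0)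
        + (if (a + 1 • d).1 ≤ x.1 ∧ (a + 1 • d).2 ≤ x.2 ∧
              Mp a d (x.1 - (a + 1 • d).1, x.2 - (a + 1 • d).2) then 1 else 0) := by
  have guard1 : ((a + 1 • d).1 ≤ x.1 ∧ (a + 1 • d).2 ≤ x.2 ∧
      Mp a d (x.1 - (a + 1 • d).1, x.2 - (a + 1 • d).2)) ↔
      ∃ p r : ℕ, x = (p + r + 1) • a + (2 * r + 1) • d := by
    rw [guard_iff]
    constructor
    · rintro ⟨y, rfl, p, r, rfl⟩
      exact ⟨p, r, M1toS p r⟩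
    · rintro ⟨p, r, rfl⟩
      exact ⟨p • (a + 0 • d) + r • (a + 2 • d), (M1toS p r).symm, p, r, rfl⟩
  by_cases hS : x ∈ Sadk a d 2
  · obtain ⟨m, n, hn, rfl⟩ := (mem_Sadk_iff _).mp hS
    rw [if_pos hS]
    rcases Nat.even_or_odd n with ⟨c, hc⟩ | ⟨c, hc⟩
    · -- n even: x ∈ M, second term 0
      have hMx : Mp a d (m • a + n • d) := by
        refine ⟨m - c, c, ?_⟩
        rw [MtoS]
        congr 2 <;> omega
      rw [if_pos hMx, if_neg]
      · norm_num
      · rw [guard1]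
        rintro ⟨p, r, hpr⟩
        have := uniq hli hpr
        omega
    · -- n oddatum: x ∈ g₁ + M
      have hg1 : ((a + 1 • d).1 ≤ (m • a + n • d).1 ∧ (a + 1 • d).2 ≤ (m • a + n • d).2 ∧
          Mp a d ((m • a + n • d).1 - (a + 1 • d).1, (m • a + n • d).2 - (a + 1 • d).2)) := by
        rw [guard1]
        refine ⟨m - 1 - c, c, ?_⟩
        congr 2 <;> omega
      rw [if_pos hg1, if_neg]
      · norm_num
      · rintro ⟨p, r, hpr⟩
        rw [MtoS] at hpr
        have := uniq hli hpr
        omega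
  · rw [if_neg hS, if_neg, if_neg]
    · norm_num
    · rw [guard1]
      rintro ⟨p, r, rfl⟩
      exact hS ((mem_Sadk_iff _).mpr ⟨p + r + 1, 2 * r + 1, by omega, rfl⟩)
    · rintro ⟨p, r, rfl⟩
      rw [MtoS] at hS
      exact hS ((mem_Sadk_iff _).mpr ⟨p + r, 2 * r, by omega, rfl⟩)



open MvPowerSeries

noncomputable def σ2 (s : ℕ × ℕ) : Fin 2 →₀ ℕ := Finsupp.single 0 s.1 + Finsupp.single 1 s.2

lemma σ2_apply0 (s : ℕ × ℕ) : σ2 s 0 = s.1 := by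
  simp [σ2, Finsupp.single_apply]

lemma σ2_apply1 (s : ℕ × ℕ) : σ2 s 1 = s.2 := by
  simp [σ2, Finsupp.single_apply]

lemma σ2_add (s t : ℕ × ℕ) : σ2 (s + t) = σ2 s + σ2 t := by
  ext i
  fin_cases i <;> simp [σ2_apply0, σ2_apply1, Finsupp.add_apply]

lemma Tm_eq (s : ℕ × ℕ) : Tm 𝕜 s = MvPowerSeries.monomial (σ2 s) (1 : 𝕜) := rfl

lemma Tm_mul (s t : ℕ × ℕ) : Tm 𝕜 s * Tm 𝕜 t = Tm 𝕜 (s + t) := by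
  rw [Tm_eq, Tm_eq, Tm_eq, monomial_mul_monomial, σ2_add, one_mul]

open scoped Classical in
/-- indicator power series -/
noncomputable def ind (P : ℕ × ℕ → Prop) : MvPowerSeries (Fin 2) 𝕜 :=
  fun e => if P (e 0, e 1) then 1 else 0

lemma coeff_ind (P : ℕ × ℕ → Prop) (e : Fin 2 →₀ ℕ) :
    MvPowerSeries.coeff e (ind 𝕜 P) = if P (e 0, e 1) then 1 else 0 := by
  rw [coeff_apply, ind]

lemma hilbert_eq_ind (S : AddSubmonoid (ℕ × ℕ)) :
    hilbertSeries 𝕜 S = ind 𝕜 (· ∈ S) := by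
  funext e
  by_cases h : (e 0, e 1) ∈ S <;> simp [hilbertSeries, ind, h]

lemma σ2_le_iff (s : ℕ × ℕ) (e : Fin 2 →₀ ℕ) :
    σ2 s ≤ e ↔ s.1 ≤ e 0 ∧ s.2 ≤ e 1 := by
  rw [Finsupp.le_def]
  constructor
  · intro h
    exact ⟨by simpa [σ2_apply0] using h 0, by simpa [σ2_apply1] using h 1⟩
  · rintro ⟨h0, h1⟩ i
    fin_cases i <;> simp [σ2_apply0, σ2_apply1, h0, h1]

lemma coeff_ind_mul_Tm (P : ℕ × ℕ → Prop) (s : ℕ × ℕ) (e : Fin 2 →₀ ℕ) :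
    MvPowerSeries.coeff e (ind 𝕜 P * Tm 𝕜 s) =
      if s.1 ≤ e 0 ∧ s.2 ≤ e 1 ∧ P (e 0 - s.1, e 1 - s.2) then 1 else 0 := by
  rw [Tm_eq, MvPowerSeries.coeff_mul_monomial, coeff_ind]
  by_cases h : σ2 s ≤ e
  · rw [if_pos h]
    have h' := (σ2_le_iff s e).mp h
    have he0 : (e - σ2 s) 0 = e 0 - s.1 := by rw [Finsupp.tsub_apply, σ2_apply0]
    have he1 : (e - σ2 s) 1 = e 1 - s.2 := by rw [Finsupp.tsub_apply, σ2_apply1]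
    rw [he0, he1, mul_one]
    by_cases hP : P (e 0 - s.1, e 1 - s.2)
    · rw [if_pos hP, if_pos ⟨h'.1, h'.2, hP⟩]
    · rw [if_neg hP, if_neg (by tauto)]
  · rw [if_neg h]
    rw [σ2_le_iff] at h
    rw [if_neg (by tauto)]

lemma eq_zero_iff (e : Fin 2 →₀ ℕ) : e = 0 ↔ e 0 = 0 ∧ e 1 = 0 := by
  constructor
  · rintro rfl; simp
  · rintro ⟨h0, h1⟩
    ext i
    fin_cases i <;> simpa


lemma gsum (a d : ℕ × ℕ) : (a + 1 • d) + (a + 1 • d) = 2 • a + 2 • d := by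
  apply Prod.ext <;> simp only [Prod.fst_add, Prod.snd_add, smul_fst, smul_snd] <;> ring

lemma hilbert_part {a d : ℕ × ℕ} (hli : qLinIndep a d) :
    hilbertSeries 𝕜 (Sadk a d 2) * ∏ i ∈ Finset.range 3, (1 - Tm 𝕜 (a + i • d)) =
      1 - Tm 𝕜 (2 • a + 2 • d) := by
  set T₀ := Tm 𝕜 (a + 0 • d) with hT0
  set T₁ := Tm 𝕜 (a + 1 • d) with hT1
  set T₂ := Tm 𝕜 (a + 2 • d) with hT2
  set G := ind 𝕜 (Mp a d) with hG
  have step1 : G * ((1 - T₀) * (1 - T₂)) = 1 := by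
    have expand : G * ((1 - T₀) * (1 - T₂)) = G - G * T₀ - G * T₂ + G * (T₀ * T₂) := by ring
    rw [expand, hT0, hT2, Tm_mul]
    apply MvPowerSeries.ext
    intro e
    rw [map_add, map_sub, map_sub, coeff_ind, coeff_ind_mul_Tm, coeff_ind_mul_Tm,
      coeff_ind_mul_Tm, MvPowerSeries.coeff_one, if_congr (eq_zero_iff e) rfl rfl]
    exact pureM 𝕜 hli (e 0, e 1)
  have step2 : hilbertSeries 𝕜 (Sadk a d 2) = G + G * T₁ := by
    rw [hilbert_eq_ind]
    apply MvPowerSeries.ext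
    intro e
    rw [map_add, coeff_ind, coeff_ind, hT1, coeff_ind_mul_Tm]
    exact pureS 𝕜 hli (e 0, e 1)
  have step3 : ∏ i ∈ Finset.range 3, (1 - Tm 𝕜 (a + i • d)) =
      (1 - T₀) * (1 - T₁) * (1 - T₂) := by
    rw [Finset.prod_range_succ, Finset.prod_range_succ, Finset.prod_range_one]
  rw [step3, step2]
  have expand2 : (G + G * T₁) * ((1 - T₀) * (1 - T₁) * (1 - T₂))
      = (G * ((1 - T₀) * (1 - T₂))) * ((1 + T₁) * (1 - T₁)) := by ring
  rw [expand2, step1, one_mul]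
  have expand3 : (1 + T₁) * (1 - T₁) = 1 - T₁ * T₁ := by ring
  rw [expand3, hT1, Tm_mul, gsum]

end Sad2

namespace Sad2I

open Sad2 MvPolynomial

variable {a d : ℕ × ℕ}


lemma σ2_inj {s t : ℕ × ℕ} (h : σ2 s = σ2 t) : s = t := by
  have h0 := DFunLike.congr_fun h (0 : Fin 2)
  have h1 := DFunLike.congr_fun h (1 : Fin 2)
  rw [σ2_apply0, σ2_apply0] at h0
  rw [σ2_apply1, σ2_apply1] at h1
  exact Prod.ext_iff.mpr ⟨h0, h1⟩

lemma σ2_smul (k : ℕ) (s : ℕ × ℕ) : k • σ2 s = σ2 (k • s) := by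
  ext i
  fin_cases i <;>
    simp [σ2, smul_fst, smul_snd, Finsupp.single_apply]

lemma mono2_eq (s : ℕ × ℕ) : mono2 𝕜 s = monomial (σ2 s) 1 := rfl

lemma mono2_mul (s t : ℕ × ℕ) : mono2 𝕜 s * mono2 𝕜 t = mono2 𝕜 (s + t) := by
  rw [mono2_eq, mono2_eq, mono2_eq, monomial_mul, one_mul, σ2_add]

lemma mono2_pow (k : ℕ) (s : ℕ × ℕ) : mono2 𝕜 s ^ k = mono2 𝕜 (k • s) := by
  rw [mono2_eq, mono2_eq, monomial_pow, one_pow, σ2_smul]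

lemma mem_toricIdeal2 (f : MvPolynomial (Fin 3) 𝕜) :
    f ∈ toricIdeal2 𝕜 a d ↔
      aeval (fun i : Fin 3 => mono2 𝕜 (a + (i : ℕ) • d)) f = 0 := by
  rw [toricIdeal2, RingHom.mem_ker]

/-- the exponent triple (p,q,r) as an element of `Fin 3 →₀ ℕ` -/
noncomputable def triple (p q r : ℕ) : Fin 3 →₀ ℕ :=
  Finsupp.single 0 p + Finsupp.single 1 q + Finsupp.single 2 r

lemma triple_apply0 (p q r : ℕ) : triple p q r 0 = p := by
  simp [triple, Finsupp.single_apply]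

lemma triple_apply1 (p q r : ℕ) : triple p q r 1 = q := by
  simp [triple, Finsupp.single_apply]

lemma triple_apply2 (p q r : ℕ) : triple p q r 2 = r := by
  simp [triple, Finsupp.single_apply]

lemma eq_triple (u : Fin 3 →₀ ℕ) : u = triple (u 0) (u 1) (u 2) := by
  ext i
  fin_cases i <;> simp [triple_apply0, triple_apply1, triple_apply2]

lemma triple_congr {p q r p' q' r' : ℕ} (h1 : p = p') (h2 : q = q') (h3 : r = r') :
    triple p q r = triple p' q' r' := by rw [h1, h2, h3]

/-- the exponent of the image monomial -/
noncomputable def κm (a d : ℕ × ℕ) (u : Fin 3 →₀ ℕ) : Fin 2 →₀ ℕ :=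
  σ2 ((u 0 + u 1 + u 2) • a + (u 1 + 2 * u 2) • d)

lemma phi_monomial (u : Fin 3 →₀ ℕ) (c : 𝕜) :
    aeval (fun i : Fin 3 => mono2 𝕜 (a + (i : ℕ) • d)) (monomial u c)
      = monomial (κm a d u) c := by
  rw [aeval_monomial, Finsupp.prod_fintype _ _ (fun i => pow_zero _), Fin.prod_univ_three]
  have c0 : ((0 : Fin 3) : ℕ) = 0 := rfl
  have c1 : ((1 : Fin 3) : ℕ) = 1 := rfl
  have c2 : ((2 : Fin 3) : ℕ) = 2 := rfl
  rw [c0, c1, c2, mono2_pow, mono2_pow, mono2_pow, mono2_mul, mono2_mul]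
  have hcomb : u 0 • (a + 0 • d) + u 1 • (a + 1 • d) + u 2 • (a + 2 • d)
      = (u 0 + u 1 + u 2) • a + (u 1 + 2 * u 2) • d := by
    apply Prod.ext <;>
      simp only [Prod.fst_add, Prod.snd_add, smul_fst, smul_snd] <;> ring
  rw [hcomb, mono2_eq, κm, algebraMap_eq, C_mul_monomial, mul_one]

lemma κm_triple (p q r : ℕ) :
    κm a d (triple p q r) = σ2 ((p + q + r) • a + (q + 2 * r) • d) := by
  rw [κm, triple_apply0, triple_apply1, triple_apply2]

/-- normal form of a monomial exponent, as a function of (m, n) -/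
noncomputable def nfm (m n : ℕ) : Fin 3 →₀ ℕ :=
  triple (m - n / 2 - n % 2) (n % 2) (n / 2)

lemma κm_inj (hli : qLinIndep a d) {u w : Fin 3 →₀ ℕ} (hu : u 1 ≤ 1) (hw : w 1 ≤ 1)
    (h : κm a d u = κm a d w) : u = w := by
  rw [κm, κm] at h
  have h2 := uniq hli (σ2_inj h)
  have e1 : u 1 = w 1 := by omega
  have e2 : u 2 = w 2 := by omega
  have e0 : u 0 = w 0 := by omega
  rw [eq_triple u, eq_triple w, e0, e1, e2]

lemma red (c : 𝕜) : ∀ q p r : ℕ,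
    monomial (triple p q r) c - monomial (nfm (p + q + r) (q + 2 * r)) c ∈
      Ideal.span ({X 1 * X 1 - X 0 * X 2} : Set (MvPolynomial (Fin 3) 𝕜)) := by
  intro q
  induction q using Nat.strong_induction_on with
  | _ q ih =>
    intro p r
    by_cases hq : q ≤ 1
    · have hnf : nfm (p + q + r) (q + 2 * r) = triple p q r := by
        rw [nfm]
        exact triple_congr (by omega) (by omega) (by omega)
      rw [hnf, sub_self]
      exact Ideal.zero_mem _
    · push_neg at hq
      have hXone : ∀ i : Fin 3, (X i : MvPolynomial (Fin 3) 𝕜)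
          = monomial (Finsupp.single i 1) 1 := fun i => by
        rw [← X_pow_eq_monomial, pow_one]
      have hXX : (X 1 : MvPolynomial (Fin 3) 𝕜) * X 1
          = monomial (Finsupp.single 1 1 + Finsupp.single 1 1) 1 := by
        rw [hXone, monomial_mul, one_mul]
      have hXZ : (X 0 : MvPolynomial (Fin 3) 𝕜) * X 2
          = monomial (Finsupp.single 0 1 + Finsupp.single 2 1) 1 := by
        rw [hXone, hXone, monomial_mul, one_mul]
      have h1 : monomial (triple p q r) c - monomial (triple (p + 1) (q - 2) (r + 1)) c ∈
          Ideal.span ({X 1 * X 1 - X 0 * X 2} : Set (MvPolynomial (Fin 3) 𝕜)) := by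
        rw [Ideal.mem_span_singleton']
        refine ⟨monomial (triple p (q - 2) r) c, ?_⟩
        have e1 : triple p (q - 2) r + (Finsupp.single 1 1 + Finsupp.single 1 1)
            = triple p q r := by
          ext i
          fin_cases i <;> simp [triple, Finsupp.single_apply] <;> omega
        have e2 : triple p (q - 2) r + (Finsupp.single 0 1 + Finsupp.single 2 1)
            = triple (p + 1) (q - 2) (r + 1) := by
          ext i
          fin_cases i <;> simp [triple, Finsupp.single_apply] <;> omega
        rw [mul_sub, hXX, hXZ, monomial_mul, monomial_mul, mul_one, e1, e2]
      have h2 := ih (q - 2) (by omega) (p + 1) (r + 1)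
      have h3 : nfm ((p + 1) + (q - 2) + (r + 1)) ((q - 2) + 2 * (r + 1))
          = nfm (p + q + r) (q + 2 * r) := by
        congr 1 <;> omega
      rw [h3] at h2
      have h4 := Ideal.add_mem _ h1 h2
      rwa [sub_add_sub_cancel] at h4

lemma ideal_part (hli : qLinIndep a d) :
    toricIdeal2 𝕜 a d = Ideal.span ({X 1 * X 1 - X 0 * X 2} : Set (MvPolynomial (Fin 3) 𝕜)) := by
  have heasy : Ideal.span ({X 1 * X 1 - X 0 * X 2} : Set (MvPolynomial (Fin 3) 𝕜)) ≤
      toricIdeal2 𝕜 a d := by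
    rw [Ideal.span_le, Set.singleton_subset_iff]
    show _ ∈ toricIdeal2 𝕜 a d
    rw [mem_toricIdeal2, map_sub, map_mul, map_mul, aeval_X, aeval_X, aeval_X,
      mono2_mul, mono2_mul]
    have heq : (a + ((1 : Fin 3) : ℕ) • d) + (a + ((1 : Fin 3) : ℕ) • d)
        = (a + ((0 : Fin 3) : ℕ) • d) + (a + ((2 : Fin 3) : ℕ) • d) := by
      apply Prod.ext <;>
        simp only [Prod.fst_add, Prod.snd_add, smul_fst, smul_snd] <;>
        norm_num <;> ring
    rw [heq, sub_self]
  refine le_antisymm ?_ heasy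
  intro f hf
  rw [mem_toricIdeal2] at hf
  classical
  set J := Ideal.span ({X 1 * X 1 - X 0 * X 2} : Set (MvPolynomial (Fin 3) 𝕜)) with hJ
  set g : MvPolynomial (Fin 3) 𝕜 :=
    ∑ u ∈ f.support, monomial (nfm (u 0 + u 1 + u 2) (u 1 + 2 * u 2)) (coeff u f) with hg
  have hfg : f - g ∈ J := by
    nth_rewrite 1 [← support_sum_monomial_coeff f]
    rw [hg, ← Finset.sum_sub_distrib]
    apply Ideal.sum_mem
    intro u _
    have h := red 𝕜 (coeff u f) (u 1) (u 0) (u 2)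
    rwa [← eq_triple u] at h
  have hΦg : aeval (fun i : Fin 3 => mono2 𝕜 (a + (i : ℕ) • d)) g = 0 := by
    have h1 := (mem_toricIdeal2 𝕜 (f - g)).mp (heasy hfg)
    rw [map_sub, hf, zero_sub, neg_eq_zero] at h1
    exact h1
  have hgnormal : ∀ u ∈ g.support, u 1 ≤ 1 := by
    intro u hu
    rw [hg] at hu
    obtain ⟨v, _, hv⟩ := Finset.mem_biUnion.mp (MvPolynomial.support_sum hu)
    have hmem := MvPolynomial.support_monomial_subset hv
    rw [Finset.mem_singleton] at hmem
    rw [hmem, nfm, triple_apply1]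
    omega
  have hg0 : g = 0 := by
    apply MvPolynomial.ext
    intro w
    rw [coeff_zero]
    by_cases hw : w 1 ≤ 1
    · have hsum : aeval (fun i : Fin 3 => mono2 𝕜 (a + (i : ℕ) • d)) g
          = ∑ u ∈ g.support, monomial (κm a d u) (coeff u g) := by
        nth_rewrite 1 [← support_sum_monomial_coeff g]
        rw [map_sum]
        exact Finset.sum_congr rfl fun u _ => phi_monomial 𝕜 u (coeff u g)
      have hc : coeff (κm a d w)
          (aeval (fun i : Fin 3 => mono2 𝕜 (a + (i : ℕ) • d)) g) = 0 := by
        rw [hΦg, coeff_zero]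
      rw [hsum, coeff_sum] at hc
      have hrw : ∀ u ∈ g.support,
          coeff (κm a d w) (monomial (κm a d u) (coeff u g))
            = if u = w then coeff u g else 0 := by
        intro u hu
        rw [coeff_monomial]
        by_cases h : u = w
        · rw [if_pos h, if_pos (by rw [h])]
        · rw [if_neg h, if_neg]
          intro hk
          exact h (κm_inj hli (hgnormal u hu) hw hk)
      rw [Finset.sum_congr rfl hrw, Finset.sum_ite_eq' g.support w] at hc
      by_cases hws : w ∈ g.support
      · rwa [if_pos hws] at hc
      · exact MvPolynomial.notMem_support_iff.mp hws
    · by_contra h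
      exact hw (hgnormal w (MvPolynomial.mem_support_iff.mpr h))
  have hfeq : f = f - g := by rw [hg0, sub_zero]
  rw [hfeq]
  exact hfg


end Sad2I


/-- For `k = 2`: the defining ideal of `S_{a,d,2}` is the principal ideal `⟨x₂² − x₁x₃⟩`, and
the Hilbert series of `𝕜[S_{a,d,2}]` is
`(1 − t^{2a+2d}) / ((1−t^a)(1−t^{a+d})(1−t^{a+2d}))` (stated with denominator cleared). -/
theorem toricIdeal_and_hilbertSeries_Sad2 (a d : ℕ × ℕ)
    (hli : qLinIndep a d) (hmin : minGen a d 2) :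
    toricIdeal2 𝕜 a d =
      Ideal.span ({X 1 * X 1 - X 0 * X 2} : Set (MvPolynomial (Fin 3) 𝕜)) ∧
    hilbertSeries 𝕜 (Sadk a d 2) * ∏ i ∈ Finset.range 3, (1 - Tm 𝕜 (a + i • d)) =
      1 - Tm 𝕜 (2 • a + 2 • d) := by
  constructor
  · exact Sad2I.ideal_part 𝕜 hli
  · exact Sad2.hilbert_part 𝕜 hli
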